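/- Let a > 1 and M < a be a positive integer. Let X₁ be a real random variable with bounded density f_{X₁} ≤ f_max, and for each n let Ũ_n be a random variable taking at most M^n distinct values, each value constant on a measurable partition {I_m} of ℝ into M^n sets with X₁-measurability (Ũ_n = u(m) on {X₁ ∈ I_m}). Then for every bounded interval I, P(a^n·X₁ + Ũ_n ∈ I) ≤ M^n·a^{−n}·f_max·|I|, and hence P(a^n·X₁ + Ũ_n ∈ I) → 0 as n → ∞. -/

import Mathlib

/-!
On the event `{X₁ ∈ I m}` the variable `Ũₙ` is the constant `u m`, so the event
`{aⁿ X₁ + Ũₙ ∈ [c, d]}` is covered by the `Mⁿ` events `{aⁿ X₁ + u m ∈ [c, d]}`. Each of these is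
`X₁` landing in an interval of length `(d - c) / aⁿ`, which has probability at most
`fmax (d - c) / aⁿ` because the density of `X₁` is bounded by `fmax`. Summing gives the bound
`(M / a)ⁿ fmax (d - c)`, which tends to `0` since `M < a`.
-/

open MeasureTheory Filter

open scoped ENNReal

namespace MeasureTheory

theorem measure_preimage_le_of_density_le {Ω α : Type*} [MeasurableSpace Ω] [MeasurableSpace α]
    {μ : Measure Ω} {ν : Measure α} {X : Ω → α} (hX : Measurable X) {g : α → ℝ≥0∞} {C : ℝ≥0∞}
    (hdens : μ.map X = ν.withDensity g) (hg : ∀ x, g x ≤ C) (s : Set α) :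
    μ (X ⁻¹' s) ≤ C * ν s :=
  calc μ (X ⁻¹' s) ≤ μ.map X s := Measure.le_map_apply hX.aemeasurable s
    _ ≤ (C • ν) s := by
      rw [hdens, ← withDensity_const]
      exact withDensity_mono (ae_of_all _ hg) s
    _ = C * ν s := rfl

end MeasureTheory

theorem Real.volume_preimage_mul_add {t : ℝ} (ht : t ≠ 0) (u : ℝ) (s : Set ℝ) :
    volume ((fun x => t * x + u) ⁻¹' s) = ENNReal.ofReal |t⁻¹| * volume s := by
  rw [show (fun x => t * x + u) ⁻¹' s = (t * ·) ⁻¹' ((· + u) ⁻¹' s) from rfl,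
    Real.volume_preimage_mul_left ht, measure_preimage_add_right]

theorem ENNReal.ofReal_mul_ofReal_le (p q : ℝ) :
    ENNReal.ofReal p * ENNReal.ofReal q ≤ ENNReal.ofReal (p * q) := by
  rcases le_total 0 p with hp | hp
  · rw [ENNReal.ofReal_mul hp]
  · simp [ENNReal.ofReal_of_nonpos hp]

theorem setOf_mul_add_mem_subset_iUnion {Ω ι : Type*} (X U : Ω → ℝ) (u : ι → ℝ)
    (hU : ∀ ω, U ω ∈ Set.range u) (t : ℝ) (s : Set ℝ) :
    {ω | t * X ω + U ω ∈ s} ⊆ ⋃ m, X ⁻¹' ((fun x => t * x + u m) ⁻¹' s) := by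
  intro ω hω
  obtain ⟨m, hm⟩ := hU ω
  exact Set.mem_iUnion.mpr ⟨m, by simpa [hm] using hω⟩

theorem measure_mul_add_mem_le {Ω ι : Type*} [MeasurableSpace Ω] [Fintype ι] {μ : Measure Ω}
    {X : Ω → ℝ} (hX : Measurable X) {g : ℝ → ℝ≥0∞} {C : ℝ≥0∞}
    (hdens : μ.map X = volume.withDensity g) (hg : ∀ x, g x ≤ C)
    {U : Ω → ℝ} {u : ι → ℝ} (hU : ∀ ω, U ω ∈ Set.range u) {t : ℝ} (ht : t ≠ 0) (s : Set ℝ) :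
    μ {ω | t * X ω + U ω ∈ s} ≤ Fintype.card ι * (C * (ENNReal.ofReal |t⁻¹| * volume s)) :=
  calc μ {ω | t * X ω + U ω ∈ s}
      ≤ ∑ m, μ (X ⁻¹' ((fun x => t * x + u m) ⁻¹' s)) :=
        (measure_mono (setOf_mul_add_mem_subset_iUnion X U u hU t s)).trans
          (measure_iUnion_fintype_le _ _)
    _ ≤ ∑ _m : ι, C * (ENNReal.ofReal |t⁻¹| * volume s) := by
        gcongr with m
        rw [← Real.volume_preimage_mul_add ht (u m)]
        exact measure_preimage_le_of_density_le hX hdens hg _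
    _ = Fintype.card ι * (C * (ENNReal.ofReal |t⁻¹| * volume s)) := by
        rw [Finset.sum_const, Finset.card_univ, nsmul_eq_mul]

theorem tendsto_ofReal_pow_div_pow_mul_nhds_zero {r a : ℝ} (hr : 0 ≤ r) (hra : r < a) (K : ℝ) :
    Tendsto (fun n : ℕ => ENNReal.ofReal (r ^ n / a ^ n * K)) atTop (nhds 0) := by
  have ha : 0 < a := hr.trans_lt hra
  have h := (tendsto_pow_atTop_nhds_zero_of_lt_one (div_nonneg hr ha.le)
    ((div_lt_one ha).mpr hra)).mul_const K
  rw [zero_mul] at h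
  simpa only [div_pow, ENNReal.ofReal_zero] using ENNReal.tendsto_ofReal h

theorem stmt_14_general {Ω : Type*} [MeasurableSpace Ω] (μ : Measure Ω)
    (a : ℝ) (M : ℕ) (hMa : (M : ℝ) < a)
    (X₁ : Ω → ℝ) (hX : Measurable X₁)
    (f : ℝ → ℝ) (fmax : ℝ) (hfb : ∀ x, f x ≤ fmax)
    (hdens : Measure.map X₁ μ = volume.withDensity (fun x => ENNReal.ofReal (f x)))
    (U : ℕ → Ω → ℝ)
    (hU : ∀ n, ∃ (I : Fin (M ^ n) → Set ℝ) (u : Fin (M ^ n) → ℝ),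
      (∀ m, MeasurableSet (I m)) ∧ Pairwise (Function.onFun Disjoint I) ∧
      (⋃ m, I m) = Set.univ ∧ (∀ ω m, X₁ ω ∈ I m → U n ω = u m))
    (c d : ℝ) :
    (∀ n, μ {ω | a ^ n * X₁ ω + U n ω ∈ Set.Icc c d}
        ≤ ENNReal.ofReal ((M : ℝ) ^ n / a ^ n * fmax * (d - c))) ∧
      Tendsto (fun n => μ {ω | a ^ n * X₁ ω + U n ω ∈ Set.Icc c d}) atTop (nhds 0) := by
  have ha : 0 < a := (Nat.cast_nonneg M).trans_lt hMa
  have key : ∀ n, μ {ω | a ^ n * X₁ ω + U n ω ∈ Set.Icc c d}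
      ≤ ENNReal.ofReal ((M : ℝ) ^ n / a ^ n * fmax * (d - c)) := by
    intro n
    obtain ⟨I, u, -, -, hcover, hconst⟩ := hU n
    have hrange : ∀ ω, U n ω ∈ Set.range u := fun ω => by
      obtain ⟨m, hm⟩ := Set.mem_iUnion.mp (hcover.symm ▸ Set.mem_univ (X₁ ω))
      exact ⟨m, (hconst ω m hm).symm⟩
    refine (measure_mul_add_mem_le hX hdens (fun x => ENNReal.ofReal_le_ofReal (hfb x)) hrange
      (pow_pos ha n).ne' _).trans ?_
    rw [Fintype.card_fin, Real.volume_Icc, abs_of_pos (inv_pos.mpr (pow_pos ha n)),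
      ← ENNReal.ofReal_natCast, Nat.cast_pow]
    calc _ ≤ ENNReal.ofReal ((M : ℝ) ^ n * (fmax * ((a ^ n)⁻¹ * (d - c)))) := by
          grw [ENNReal.ofReal_mul_ofReal_le, ENNReal.ofReal_mul_ofReal_le,
            ENNReal.ofReal_mul_ofReal_le]
      _ = _ := by rw [div_eq_mul_inv]; ring_nf
  exact ⟨key, tendsto_of_tendsto_of_tendsto_of_le_of_le tendsto_const_nhds
    (by simpa only [mul_assoc] using
      tendsto_ofReal_pow_div_pow_mul_nhds_zero (Nat.cast_nonneg M) hMa (fmax * (d - c)))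
    (fun _ => zero_le) key⟩

/-- Converse for stability in probability: with `a > 1`, a positive integer `M < a`,
`X₁` with density bounded by `fmax`, and each `Ũ_n` taking at most `M^n` values
(constant on a measurable partition of `ℝ` pulled back through `X₁`), for every bounded
interval `[c, d]` one has `P(a^n·X₁ + Ũ_n ∈ [c, d]) ≤ M^n·a^(−n)·fmax·(d − c)`, and
hence this probability tends to `0` as `n → ∞`. -/
theorem stmt_14 {Ω : Type*} [MeasurableSpace Ω] (μ : Measure Ω) [IsProbabilityMeasure μ]
    (a : ℝ) (ha : 1 < a) (M : ℕ) (hM : 0 < M) (hMa : (M : ℝ) < a)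
    (X₁ : Ω → ℝ) (hX : Measurable X₁)
    (f : ℝ → ℝ) (fmax : ℝ) (hf0 : ∀ x, 0 ≤ f x) (hfb : ∀ x, f x ≤ fmax)
    (hdens : Measure.map X₁ μ = volume.withDensity (fun x => ENNReal.ofReal (f x)))
    (U : ℕ → Ω → ℝ)
    (hU : ∀ n, ∃ (I : Fin (M ^ n) → Set ℝ) (u : Fin (M ^ n) → ℝ),
      (∀ m, MeasurableSet (I m)) ∧ Pairwise (Function.onFun Disjoint I) ∧
      (⋃ m, I m) = Set.univ ∧ (∀ ω m, X₁ ω ∈ I m → U n ω = u m))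
    (c d : ℝ) (hcd : c ≤ d) :
    (∀ n, μ {ω | a ^ n * X₁ ω + U n ω ∈ Set.Icc c d}
        ≤ ENNReal.ofReal ((M : ℝ) ^ n / a ^ n * fmax * (d - c))) ∧
      Tendsto (fun n => μ {ω | a ^ n * X₁ ω + U n ω ∈ Set.Icc c d}) atTop (nhds 0) :=
  stmt_14_general μ a M hMa X₁ hX f fmax hfb hdens U hU c d
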